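/- In a cycle C_n (n ≥ 3), for any vertex v, the number of edges of C_n monitored by v equals n-1 if n is odd and n-2 if n is even. -/

import Mathlib

open SimpleGraph

variable {V : Type*}

/-- Edge `e` is monitored by vertex `x` in `G`: some distance from `x` changes
when `e` is removed. -/
def monitors (G : SimpleGraph V) (x : V) (e : Sym2 V) : Prop :=
  ∃ y : V, G.edist x y ≠ (G.deleteEdges {e}).edist x y

/-- `M` is a distance-edge-monitoring set of `G`. -/
def IsDEMSet (G : SimpleGraph V) (M : Set V) : Prop :=
  ∀ e ∈ G.edgeSet, ∃ x ∈ M, monitors G x e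

/-- The distance-edge-monitoring number of `G`. -/
noncomputable def dem (G : SimpleGraph V) : ℕ :=
  sInf {n | ∃ M : Set V, M.ncard = n ∧ IsDEMSet G M}

/-!
Rotating the cycle by `x ↦ x - (c + 1)` is an automorphism taking the edge `{c, c + 1}` to
`{-1, 0}`, and deleting `{-1, 0}` from `C_n` leaves exactly the path `0 - 1 - ⋯ - (n - 1)`.
So `v` monitors `{c, c + 1}` iff `w = v - (c + 1)` monitors `{-1, 0}`, which is a comparison of
the explicit distances `min (|w - y|, n - |w - y|)` in `C_n` and `|w - y|` in `P_n`: they agree for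
every `y` iff `max (w, n - 1 - w) ≤ n / 2`, i.e. `w` is one of the one or two middle vertices
of the path. Hence all but one (`n` odd) or two (`n` even) edges are monitored.
-/

namespace SimpleGraph

variable {W : Type*} {G : SimpleGraph V} {H : SimpleGraph W}

theorem le_add_edist_of_adj {f : V → ℕ} (hf : ∀ a b, G.Adj a b → f b ≤ f a + 1) (u v : V) :
    (f v : ℕ∞) ≤ f u + G.edist u v := by
  have walk_bound {a b : V} (p : G.Walk a b) : f b ≤ f a + p.length := by
    induction p with
    | nil => simp
    | cons h _ ih =>
      have := hf _ _ h
      rw [Walk.length_cons]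
      omega
  by_cases huv : G.Reachable u v
  · obtain ⟨p, hp⟩ := huv.exists_walk_length_eq_edist
    rw [← hp]
    exact_mod_cast walk_bound p
  · simp [edist_eq_top_of_not_reachable huv]

theorem Hom.edist_le (f : G →g H) (u v : V) : H.edist (f u) (f v) ≤ G.edist u v := by
  by_cases huv : G.Reachable u v
  · obtain ⟨p, hp⟩ := huv.exists_walk_length_eq_edist
    rw [← hp, ← Walk.length_map f]
    exact SimpleGraph.edist_le _
  · simp [edist_eq_top_of_not_reachable huv]

theorem Iso.edist_eq (φ : G ≃g H) (u v : V) : H.edist (φ u) (φ v) = G.edist u v :=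
  le_antisymm (Hom.edist_le φ.toHom u v) <| by
    simpa using Hom.edist_le φ.symm.toHom (φ u) (φ v)

def Iso.deleteEdgesSingleton (φ : G ≃g H) (e : Sym2 V) :
    G.deleteEdges {e} ≃g H.deleteEdges {e.map φ} where
  toEquiv := φ.toEquiv
  map_rel_iff' {a b} := by
    change (H.deleteEdges _).Adj (φ a) (φ b) ↔ _
    simp only [deleteEdges_adj, Set.mem_singleton_iff, φ.map_adj_iff, ← Sym2.map_mk,
      (Sym2.map.injective φ.injective).eq_iff]

theorem Iso.monitors_iff (φ : G ≃g H) {x : V} {e : Sym2 V} :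
    monitors H (φ x) (e.map φ) ↔ monitors G x e := by
  simp only [monitors, φ.surjective.exists, ← (φ.deleteEdgesSingleton e).edist_eq, φ.edist_eq]
  rfl

end SimpleGraph

theorem Fin.val_sub_cases {n : ℕ} (a b : Fin n) :
    b ≤ a ∧ ((a - b : Fin n) : ℕ) = a - b ∨ a < b ∧ ((a - b : Fin n) : ℕ) = n + a - b := by
  rcases le_or_gt b a with h | h
  · exact .inl ⟨h, Fin.coe_sub_iff_le.2 h⟩
  · exact .inr ⟨h, Fin.coe_sub_iff_lt.2 h⟩

theorem Fin.val_neg_one_of_neZero {n : ℕ} [NeZero n] : ((-1 : Fin n) : ℕ) = n - 1 := by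
  obtain ⟨m, rfl⟩ := Nat.exists_eq_succ_of_ne_zero (NeZero.ne n)
  simp

namespace SimpleGraph

variable {n : ℕ}

theorem pathGraph_edist (u v : Fin n) : (pathGraph n).edist u v = Nat.dist u v := by
  refine le_antisymm ?_ ?_
  · wlog huv : u ≤ v generalizing u v
    · rw [edist_comm, Nat.dist_comm]
      exact this v u (le_of_not_ge huv)
    obtain ⟨k, hk⟩ : ∃ k, (v : ℕ) = u + k := ⟨v - u, by omega⟩
    have hdist : Nat.dist u v = k := by simp only [Nat.dist]; omega
    rw [hdist]
    induction k generalizing v with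
    | zero => simp [Fin.ext hk]
    | succ k ih =>
      let w : Fin n := ⟨u + k, by omega⟩
      have hw : (pathGraph n).Adj w v := by rw [pathGraph_adj]; simp only [w]; omega
      calc (pathGraph n).edist u v ≤ (pathGraph n).edist u w + (pathGraph n).edist w v :=
            SimpleGraph.edist_triangle
        _ ≤ k + 1 := by
          gcongr
          · exact ih w (Fin.le_iff_val_le_val.2 (by simp [w])) rfl (by simp [w, Nat.dist])
          · exact (edist_eq_one_iff_adj.2 hw).le
        _ = (k + 1 : ℕ) := by push_cast; rfl
  · have hf (a b : Fin n) (hab : (pathGraph n).Adj a b) : Nat.dist u b ≤ Nat.dist u a + 1 := by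
      rw [pathGraph_adj] at hab
      simp only [Nat.dist]
      omega
    simpa using le_add_edist_of_adj hf u v

variable [NeZero n]

theorem cycleGraph_edist (u v : Fin n) :
    (cycleGraph n).edist u v = (min (Nat.dist u v) (n - Nat.dist u v) : ℕ) := by
  refine le_antisymm ?_ ?_
  · wlog huv : u ≤ v generalizing u v
    · rw [edist_comm, Nat.dist_comm]
      exact this v u (le_of_not_ge huv)
    have hpath (a b : Fin n) : (cycleGraph n).edist a b ≤ Nat.dist a b :=
      (edist_anti pathGraph_le_cycleGraph).trans (pathGraph_edist a b).le
    have hwrap : (cycleGraph n).edist 0 (-1) ≤ 1 := by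
      rw [edist_le_one_iff_adj_or_eq, cycleGraph_adj']
      by_cases hn : n = 1
      · subst hn
        exact .inr (Subsingleton.elim _ _)
      · have := Fin.val_sub_cases (0 : Fin n) (-1)
        have := Fin.val_sub_cases (-1 : Fin n) 0
        simp only [Fin.val_neg_one_of_neZero, Fin.val_zero] at *
        omega
    rw [Nat.mono_cast.map_min, le_min_iff]
    refine ⟨hpath u v, ?_⟩
    calc (cycleGraph n).edist u v ≤ (cycleGraph n).edist u (-1) + (cycleGraph n).edist (-1) v :=
          SimpleGraph.edist_triangle
      _ ≤ (cycleGraph n).edist u 0 + (cycleGraph n).edist 0 (-1) + (cycleGraph n).edist (-1) v := by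
          gcongr
          exact SimpleGraph.edist_triangle
      _ ≤ Nat.dist u 0 + 1 + Nat.dist (-1 : Fin n) v := by gcongr <;> apply hpath
      _ = (n - Nat.dist u v : ℕ) := by
          have := v.isLt
          simp only [Fin.val_neg_one_of_neZero, Nat.dist]
          norm_cast
          omega
  · have hf (a b : Fin n) (hab : (cycleGraph n).Adj a b) :
        min (Nat.dist u b) (n - Nat.dist u b) ≤ min (Nat.dist u a) (n - Nat.dist u a) + 1 := by
      rw [cycleGraph_adj'] at hab
      have := Fin.val_sub_cases a b
      have := Fin.val_sub_cases b a
      simp only [Nat.dist, Fin.lt_def, Fin.le_def] at *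
      omega
    simpa using le_add_edist_of_adj hf u v

theorem cycleGraph_deleteEdges_neg_one_zero (hn : 3 ≤ n) :
    (cycleGraph n).deleteEdges {s(-1, 0)} = pathGraph n := by
  ext a b
  have := Fin.val_sub_cases a b
  have := Fin.val_sub_cases b a
  simp only [deleteEdges_adj, cycleGraph_adj', pathGraph_adj, Set.mem_singleton_iff, Sym2.eq_iff,
    Fin.ext_iff, Fin.val_neg_one_of_neZero, Fin.val_zero, Fin.lt_def, Fin.le_def] at *
  omega

def cycleGraphAddRight (c : Fin n) : cycleGraph n ≃g cycleGraph n where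
  toEquiv := Equiv.addRight c
  map_rel_iff' {a b} := by
    simp only [Equiv.coe_addRight, cycleGraph_adj', add_sub_add_right_eq_sub]

theorem monitors_cycleGraph_iff (v c : Fin n) :
    monitors (cycleGraph n) v s(c, c + 1) ↔ monitors (cycleGraph n) (v - (c + 1)) s(-1, 0) := by
  rw [← (cycleGraphAddRight (c + 1)).monitors_iff (x := v - (c + 1)) (e := s(-1, 0))]
  simp [cycleGraphAddRight, add_assoc]

theorem not_monitors_cycleGraph_neg_one_zero_iff (hn : 3 ≤ n) (w : Fin n) :
    ¬ monitors (cycleGraph n) w s(-1, 0) ↔ (w : ℕ) ∈ Set.Icc ((n - 1) / 2) (n / 2) := by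
  simp only [monitors, cycleGraph_deleteEdges_neg_one_zero hn, cycleGraph_edist, pathGraph_edist,
    Nat.cast_inj, not_exists, not_not, Set.mem_Icc]
  constructor
  · intro h
    have h₀ := h 0
    have h₁ := h (-1)
    simp only [Fin.val_neg_one_of_neZero, Fin.val_zero, Nat.dist] at h₀ h₁
    omega
  · intro hw y
    have := y.isLt
    simp only [Nat.dist]
    omega

theorem cycleGraph_edgeSet (hn : 2 ≤ n) :
    (cycleGraph n).edgeSet = Set.range fun c : Fin n ↦ s(c, c + 1) := by
  obtain ⟨m, rfl⟩ := Nat.exists_eq_add_of_le' hn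
  ext e
  induction e using Sym2.ind with
  | h a b =>
    simp only [mem_edgeSet, cycleGraph_adj, sub_eq_iff_eq_add, Set.mem_range, Sym2.eq_iff]
    grind

theorem injective_cycleGraph_edge (hn : 3 ≤ n) :
    Function.Injective fun c : Fin n ↦ s(c, c + 1) := by
  intro a b hab
  rcases Sym2.eq_iff.1 hab with ⟨rfl, -⟩ | ⟨hab, hba⟩
  · rfl
  · have h₁ : ((1 : Fin n) : ℕ) = 1 := by rw [Fin.val_one']; exact Nat.mod_eq_of_lt (by omega)
    have hab' : a - b = 1 := by rw [hab, add_sub_cancel_left]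
    have hba' : b - a = 1 := by rw [← hba, add_sub_cancel_left]
    have := Fin.val_sub_cases a b
    have := Fin.val_sub_cases b a
    simp only [hab', hba', h₁, Fin.lt_def, Fin.le_def] at *
    omega

theorem ncard_monitors_cycleGraph_neg_one_zero (hn : 3 ≤ n) :
    {w : Fin n | monitors (cycleGraph n) w s(-1, 0)}.ncard = if Odd n then n - 1 else n - 2 := by
  have hcompl : {w : Fin n | monitors (cycleGraph n) w s(-1, 0)}ᶜ =
      Fin.val ⁻¹' Set.Icc ((n - 1) / 2) (n / 2) := by
    ext w
    exact not_monitors_cycleGraph_neg_one_zero_iff hn w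
  have hsum := Set.ncard_add_ncard_compl {w : Fin n | monitors (cycleGraph n) w s(-1, 0)}
  rw [hcompl, Set.ncard_preimage_of_injective_subset_range Fin.val_injective, Set.ncard_Icc_nat,
    Nat.card_eq_fintype_card, Fintype.card_fin] at hsum
  · split_ifs with hodd <;> rw [Nat.odd_iff] at hodd <;> omega
  · intro k hk
    exact ⟨⟨k, by have := (Set.mem_Icc.1 hk).2; omega⟩, rfl⟩

end SimpleGraph

theorem stmt10 (n : ℕ) (hn : 3 ≤ n) (v : Fin n) :
    {e | e ∈ (SimpleGraph.cycleGraph n).edgeSet ∧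
        monitors (SimpleGraph.cycleGraph n) v e}.ncard =
      if Odd n then n - 1 else n - 2 := by
  have : NeZero n := ⟨by omega⟩
  have hrot : Function.Bijective fun c : Fin n ↦ v - (c + 1) :=
    ((Equiv.addRight 1).trans (Equiv.subLeft v)).bijective
  have hedges : {e | e ∈ (cycleGraph n).edgeSet ∧ monitors (cycleGraph n) v e} =
      (fun c : Fin n ↦ s(c, c + 1)) ''
        ((fun c ↦ v - (c + 1)) ⁻¹' {w | monitors (cycleGraph n) w s(-1, 0)}) := by
    ext e
    simp only [cycleGraph_edgeSet (by omega : 2 ≤ n), Set.mem_ofPred_eq, Set.mem_image,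
      Set.mem_preimage, Set.mem_range]
    constructor
    · rintro ⟨⟨c, rfl⟩, hm⟩
      exact ⟨c, (monitors_cycleGraph_iff v c).1 hm, rfl⟩
    · rintro ⟨c, hm, rfl⟩
      exact ⟨⟨c, rfl⟩, (monitors_cycleGraph_iff v c).2 hm⟩
  rw [hedges, Set.ncard_image_of_injective _ (injective_cycleGraph_edge hn),
    Set.ncard_preimage_of_injective_subset_range hrot.injective
      (by simp [hrot.surjective.range_eq]),
    ncard_monitors_cycleGraph_neg_one_zero hn]
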